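/- Two words u and v over the positive integers have the same right strict binary search tree under insertion if and only if they have the same weight (content) and the decreasing trees of the inverses of their standardizations have the same shape. -/

import Mathlib

/-- Binary trees labelled by elements of `α`. -/
inductive BT (α : Type) : Type
  | leaf : BT α
  | node : BT α → α → BT α → BT α
  deriving DecidableEq

namespace BT

variable {α β : Type}

/-- Map a function over the labels of a tree. -/
def map (f : α → β) : BT α → BT β
  | leaf => leaf
  | node l a r => node (map f l) (f a) (map f r)

/-- The shape of a labelled tree: its underlying unlabelled tree. -/
def shape : BT α → BT Unit := map (fun _ => ())

/-- The content of a tree: the multiset of its labels. -/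
def content : BT α → Multiset α
  | leaf => 0
  | node l a r => a ::ₘ (content l + content r)

/-- Infix (in-order) reading of a labelled tree. -/
def infixRead : BT α → List α
  | leaf => []
  | node l a r => infixRead l ++ a :: infixRead r

/-- Left-to-right postfix (post-order) reading of a labelled tree. -/
def postfixRead : BT α → List α
  | leaf => []
  | node l a r => postfixRead l ++ postfixRead r ++ [a]

/-- Right strict binary search tree: each label is ≥ everything in its left
subtree and < everything in its right subtree. -/
def IsRBST : BT ℕ+ → Prop
  | leaf => True
  | node l a r =>
      (∀ x ∈ content l, x ≤ a) ∧ (∀ x ∈ content r, a < x) ∧ IsRBST l ∧ IsRBST r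

/-- Left strict binary search tree: each label is > everything in its left
subtree and ≤ everything in its right subtree. -/
def IsLBST : BT ℕ+ → Prop
  | leaf => True
  | node l a r =>
      (∀ x ∈ content l, x < a) ∧ (∀ x ∈ content r, a ≤ x) ∧ IsLBST l ∧ IsLBST r

/-- Right strict leaf insertion: `a ≤` root label goes left, else right. -/
def rIns (a : ℕ+) : BT ℕ+ → BT ℕ+
  | leaf => node leaf a leaf
  | node l x r => if a ≤ x then node (rIns a l) x r else node l x (rIns a r)

/-- Left strict leaf insertion: `a ≥` root label goes right, else left. -/
def lIns (a : ℕ+) : BT ℕ+ → BT ℕ+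
  | leaf => node leaf a leaf
  | node l x r => if x ≤ a then node l x (lIns a r) else node (lIns a l) x r

end BT

open BT

/-- The sylvester P-symbol: insert the letters of `u` from right to left via
right strict leaf insertion. -/
def Psylv (u : List ℕ+) : BT ℕ+ := u.foldr rIns .leaf

/-- Left strict insertion of a word, processing letters left to right. -/
def Pltree (u : List ℕ+) : BT ℕ+ := u.foldl (fun t a => lIns a t) .leaf

/-- Auxiliary fuelled construction of the decreasing tree of a word:
the maximum letter is the root, and the subtrees are built recursively from
the factors to its left and right. -/
def decAux : ℕ → List ℕ+ → BT ℕ+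
  | 0, _ => .leaf
  | _ + 1, [] => .leaf
  | n + 1, (a :: l) =>
      let m := (a :: l).foldr max a
      let i := (a :: l).idxOf m
      .node (decAux n ((a :: l).take i)) m (decAux n ((a :: l).drop (i + 1)))

/-- The decreasing tree of a word (with distinct letters). -/
def decTree (u : List ℕ+) : BT ℕ+ := decAux u.length u

/-- Auxiliary fuelled construction of the increasing tree of a word. -/
def incAux : ℕ → List ℕ+ → BT ℕ+
  | 0, _ => .leaf
  | _ + 1, [] => .leaf
  | n + 1, (a :: l) =>
      let m := (a :: l).foldr min a
      let i := (a :: l).idxOf m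
      .node (incAux n ((a :: l).take i)) m (incAux n ((a :: l).drop (i + 1)))

/-- The increasing tree of a word (with distinct letters). -/
def incTree (u : List ℕ+) : BT ℕ+ := incAux u.length u

/-- The standardization of a word: the `j`-th letter `a` is relabelled by the
number of letters smaller than `a` plus the number of occurrences of `a` up to
and including position `j`. -/
def stdWord (u : List ℕ+) : List ℕ+ :=
  u.mapIdx (fun j a =>
    (u.countP (fun b => decide (b < a)) +
       (u.take (j + 1)).countP (fun b => decide (b = a))).toPNat')

/-- The inverse of a standard word, viewed as a permutation in one-line
notation: the `j`-th letter is the position of `j` in `w`. -/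
def invWord (w : List ℕ+) : List ℕ+ :=
  (List.range w.length).map (fun j => (w.idxOf (j + 1).toPNat' + 1).toPNat')

/-- A standard word: a permutation of `1, …, k` in one-line notation. -/
def IsStandard (w : List ℕ+) : Prop :=
  w.Perm ((List.range w.length).map (fun j => (j + 1).toPNat'))

/-- The quasi-Kashiwara raising operator `ė i` is defined on `u`: `u` has no
letter `i+1` to the left of a letter `i`, and `u` contains a letter `i+1`. -/
def qeDef (i : ℕ+) (u : List ℕ+) : Prop :=
  ¬ List.Sublist [i + 1, i] u ∧ (i + 1) ∈ u

/-- The quasi-Kashiwara lowering operator `ḟ i` is defined on `u`: `u` has no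
letter `i+1` to the left of a letter `i`, and `u` contains a letter `i`. -/
def qfDef (i : ℕ+) (u : List ℕ+) : Prop :=
  ¬ List.Sublist [i + 1, i] u ∧ i ∈ u

/-- The action of `ė i`: replace the leftmost letter `i+1` by `i`. -/
def qe (i : ℕ+) (u : List ℕ+) : List ℕ+ := u.set (u.idxOf (i + 1)) i

/-- The action of `ḟ i`: replace the rightmost letter `i` by `i+1`. -/
def qf (i : ℕ+) (u : List ℕ+) : List ℕ+ :=
  (u.reverse.set (u.reverse.idxOf i) (i + 1)).reverse

/-!
A right strict binary search tree is determined by its shape and its content, because its infix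
reading is its content sorted; and the content of `Psylv u` is the weight of `u`. So it suffices
to show that `Psylv u` has the shape of the decreasing tree of `std(u)⁻¹`.

The shape of `Psylv u` only depends on how the letters of `u` compare position by position, and
standardization preserves these comparisons, so we may replace `u` by the standard word
`w = std(u)`. Label each node of `Psylv w` by the position in `w` of its letter: since `w` is
inserted from right to left, every node lies below the nodes of the positions to its right, so
this is a decreasing tree. Its infix reading is `w⁻¹`, because the infix reading of `Psylv w` is
`1 2 … n`; and a decreasing tree is the decreasing tree of its infix reading.
-/

namespace BT

variable {α β γ : Type}

theorem map_map (f : α → β) (g : β → γ) (t : BT α) :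
    map g (map f t) = map (g ∘ f) t := by
  induction t <;> simp [map, *]

theorem shape_map (f : α → β) (t : BT α) : shape (map f t) = shape t :=
  map_map f _ t

theorem content_map (f : α → β) (t : BT α) : content (map f t) = (content t).map f := by
  induction t <;> simp [map, content, *]

theorem infixRead_map (f : α → β) (t : BT α) : infixRead (map f t) = (infixRead t).map f := by
  induction t <;> simp [map, infixRead, *]

theorem coe_infixRead (t : BT α) : (infixRead t : Multiset α) = content t := by
  induction t with
  | leaf => rfl
  | node l a r ihl ihr =>
    rw [infixRead, content, ← ihl, ← ihr, ← Multiset.coe_add, ← Multiset.cons_coe,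
      Multiset.add_cons]

theorem mem_infixRead {t : BT α} {x : α} : x ∈ infixRead t ↔ x ∈ content t := by
  rw [← coe_infixRead, Multiset.mem_coe]

theorem length_infixRead_eq_of_shape_eq {t t' : BT α} (h : shape t = shape t') :
    (infixRead t).length = (infixRead t').length := by
  simpa [shape, infixRead_map] using congrArg (fun s => (infixRead s).length) h

theorem eq_of_shape_eq_of_infixRead_eq {t t' : BT α} (hs : shape t = shape t')
    (hi : infixRead t = infixRead t') : t = t' := by
  induction t generalizing t' with
  | leaf => cases t' <;> first | rfl | cases hs
  | node l a r ihl ihr =>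
    cases t' with
    | leaf => cases hs
    | node l' a' r' =>
      simp only [shape, map, node.injEq] at hs
      obtain ⟨hl, -, hr⟩ := hs
      obtain ⟨hil, hir⟩ := List.append_inj hi (length_infixRead_eq_of_shape_eq hl)
      obtain ⟨rfl, hr'⟩ := List.cons_eq_cons.1 hir
      rw [ihl hl hil, ihr hr hr']

theorem content_rIns (a : ℕ+) (t : BT ℕ+) : content (rIns a t) = a ::ₘ content t := by
  induction t with
  | leaf => rfl
  | node l x r ihl ihr =>
    by_cases h : a ≤ x
    · simp [rIns, h, content, ihl, Multiset.cons_swap]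
    · simp [rIns, h, content, ihr, Multiset.cons_swap, Multiset.add_cons]

theorem IsRBST.rIns (a : ℕ+) {t : BT ℕ+} (ht : IsRBST t) : IsRBST (rIns a t) := by
  induction t with
  | leaf => simp [BT.rIns, IsRBST, content]
  | node l x r ihl ihr =>
    obtain ⟨hl, hr, htl, htr⟩ := ht
    by_cases h : a ≤ x
    · simp only [BT.rIns, if_pos h, IsRBST, content_rIns, Multiset.mem_cons, forall_eq_or_imp]
      exact ⟨⟨h, hl⟩, hr, ihl htl, htr⟩
    · simp only [BT.rIns, if_neg h, IsRBST, content_rIns, Multiset.mem_cons, forall_eq_or_imp]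
      exact ⟨hl, ⟨not_le.1 h, hr⟩, htl, ihr htr⟩

theorem IsRBST.pairwise_infixRead {t : BT ℕ+} (ht : IsRBST t) :
    (infixRead t).Pairwise (· ≤ ·) := by
  induction t with
  | leaf => exact List.Pairwise.nil
  | node l a r ihl ihr =>
    obtain ⟨hl, hr, htl, htr⟩ := ht
    simp only [mem_infixRead.symm] at hl hr
    rw [infixRead, List.pairwise_append, List.pairwise_cons]
    refine ⟨ihl htl, ⟨fun b hb => (hr b hb).le, ihr htr⟩, fun x hx b hb => ?_⟩
    rcases List.mem_cons.1 hb with rfl | hb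
    · exact hl x hx
    · exact (hl x hx).trans (hr b hb).le

theorem IsRBST.ext {t t' : BT ℕ+} (ht : IsRBST t) (ht' : IsRBST t')
    (hs : shape t = shape t') (hc : content t = content t') : t = t' := by
  refine eq_of_shape_eq_of_infixRead_eq hs
    (List.Perm.eq_of_pairwise' ht.pairwise_infixRead ht'.pairwise_infixRead ?_)
  rw [← Multiset.coe_eq_coe, coe_infixRead, coe_infixRead, hc]

def insBy (le : α → α → Bool) (a : α) : BT α → BT α
  | leaf => node leaf a leaf
  | node l x r => if le a x then node (insBy le a l) x r else node l x (insBy le a r)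

theorem rIns_eq_insBy (a : ℕ+) (t : BT ℕ+) :
    rIns a t = insBy (fun a x => decide (a ≤ x)) a t := by
  induction t <;> simp [rIns, insBy, *]

theorem content_insBy (le : α → α → Bool) (a : α) (t : BT α) :
    content (insBy le a t) = a ::ₘ content t := by
  induction t with
  | leaf => rfl
  | node l x r ihl ihr =>
    by_cases h : le a x
    · simp [insBy, h, content, ihl, Multiset.cons_swap]
    · simp [insBy, h, content, ihr, Multiset.cons_swap, Multiset.add_cons]

theorem content_foldr_insBy (le : α → α → Bool) (l : List α) :
    content (l.foldr (insBy le) leaf) = l := by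
  induction l with
  | nil => rfl
  | cons a l ih => rw [List.foldr_cons, content_insBy, ih, Multiset.cons_coe]

theorem map_insBy (f : α → β) (le : β → β → Bool) (a : α) (t : BT α) :
    map f (insBy (fun x y => le (f x) (f y)) a t) = insBy le (f a) (map f t) := by
  induction t with
  | leaf => rfl
  | node l x r ihl ihr => cases h : le (f a) (f x) <;> simp [insBy, map, *]

theorem map_foldr_insBy (f : α → β) (le : β → β → Bool) (l : List α) :
    map f (l.foldr (insBy fun x y => le (f x) (f y)) leaf) = (l.map f).foldr (insBy le) leaf := by
  induction l with
  | nil => rfl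
  | cons a l ih => rw [List.foldr_cons, map_insBy, ih]; rfl

theorem insBy_congr {le le' : α → α → Bool} {a : α} {t : BT α}
    (h : ∀ x ∈ content t, le a x = le' a x) : insBy le a t = insBy le' a t := by
  induction t with
  | leaf => rfl
  | node l x r ihl ihr =>
    simp only [content, Multiset.mem_cons, Multiset.mem_add] at h
    simp only [insBy, h x (Or.inl rfl), ihl fun y hy => h y (Or.inr (Or.inl hy)),
      ihr fun y hy => h y (Or.inr (Or.inr hy))]

theorem foldr_insBy_congr {le le' : α → α → Bool} {l : List α}
    (h : l.Pairwise fun a x => le a x = le' a x) :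
    l.foldr (insBy le) leaf = l.foldr (insBy le') leaf := by
  induction l with
  | nil => rfl
  | cons a l ih =>
    rw [List.pairwise_cons] at h
    rw [List.foldr_cons, List.foldr_cons, ih h.2]
    exact insBy_congr fun x hx => h.1 x (by simpa [content_foldr_insBy] using hx)

def IsDecreasing [LT α] : BT α → Prop
  | leaf => True
  | node l a r =>
      (∀ x ∈ content l, x < a) ∧ (∀ x ∈ content r, x < a) ∧
        IsDecreasing l ∧ IsDecreasing r

theorem IsDecreasing.insBy [LT α] (le : α → α → Bool) {a : α} {t : BT α}
    (ht : IsDecreasing t) (ha : ∀ x ∈ content t, a < x) : IsDecreasing (insBy le a t) := by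
  induction t with
  | leaf => simp [BT.insBy, IsDecreasing, content]
  | node l x r ihl ihr =>
    obtain ⟨hl, hr, htl, htr⟩ := ht
    simp only [content, Multiset.mem_cons, Multiset.mem_add, forall_eq_or_imp] at ha
    cases h : le a x
    · simp only [BT.insBy, h, Bool.false_eq_true, ↓reduceIte, IsDecreasing, content_insBy,
        Multiset.mem_cons, forall_eq_or_imp]
      exact ⟨hl, ⟨ha.1, hr⟩, htl, ihr htr fun y hy => ha.2 y (Or.inr hy)⟩
    · simp only [BT.insBy, h, ↓reduceIte, IsDecreasing, content_insBy, Multiset.mem_cons,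
        forall_eq_or_imp]
      exact ⟨⟨ha.1, hl⟩, hr, ihl htl fun y hy => ha.2 y (Or.inl hy), htr⟩

theorem isDecreasing_foldr_insBy [LT α] (le : α → α → Bool) {l : List α}
    (hl : l.Pairwise (· < ·)) : IsDecreasing (l.foldr (insBy le) leaf) := by
  induction l with
  | nil => trivial
  | cons a l ih =>
    rw [List.pairwise_cons] at hl
    exact (ih hl.2).insBy le fun x hx => hl.1 x (by simpa [content_foldr_insBy] using hx)

theorem IsDecreasing.map [Preorder α] [Preorder β] {f : α → β} (hf : StrictMono f) {t : BT α}
    (ht : IsDecreasing t) : IsDecreasing (map f t) := by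
  induction t with
  | leaf => trivial
  | node l a r ihl ihr =>
    obtain ⟨hl, hr, htl, htr⟩ := ht
    simp only [BT.map, IsDecreasing, content_map, Multiset.mem_map, forall_exists_index, and_imp,
      forall_apply_eq_imp_iff₂]
    exact ⟨fun x hx => hf (hl x hx), fun x hx => hf (hr x hx), ihl htl, ihr htr⟩

end BT

theorem content_Psylv (u : List ℕ+) : content (Psylv u) = u := by
  induction u with
  | nil => rfl
  | cons a u ih => rw [Psylv, List.foldr_cons, content_rIns, ← Psylv, ih, Multiset.cons_coe]

theorem isRBST_Psylv (u : List ℕ+) : IsRBST (Psylv u) := by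
  induction u with
  | nil => trivial
  | cons a u ih => exact ih.rIns a

theorem foldr_max_eq_of_forall_le {α : Type} [LinearOrder α] {L : List α} {c m : α}
    (hc : c ≤ m) (hm : m ∈ L) (hle : ∀ x ∈ L, x ≤ m) : L.foldr max c = m := by
  refine le_antisymm ?_ ?_
  · clear hm
    induction L with
    | nil => exact hc
    | cons a L ih =>
      simp only [List.mem_cons, forall_eq_or_imp] at hle
      exact max_le hle.1 (ih hle.2)
  · clear hle
    induction L with
    | nil => cases hm
    | cons a L ih =>
      rcases List.mem_cons.1 hm with rfl | hm
      · exact le_max_left _ _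
      · exact le_max_of_le_right (ih hm)

theorem decAux_append_cons (n : ℕ) {A B : List ℕ+} {m : ℕ+} (hA : ∀ x ∈ A, x < m)
    (hB : ∀ x ∈ B, x ≤ m) :
    decAux (n + 1) (A ++ m :: B) = node (decAux n A) m (decAux n B) := by
  obtain ⟨a, L, hL⟩ : ∃ a L, A ++ m :: B = a :: L := by cases A <;> simp
  have hle : ∀ x ∈ A ++ m :: B, x ≤ m := by
    simp only [List.mem_append, List.mem_cons]
    rintro x (hx | rfl | hx)
    exacts [(hA x hx).le, le_rfl, hB x hx]
  have hmax : (a :: L).foldr max a = m :=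
    foldr_max_eq_of_forall_le (hle a (by simp [hL])) (by simp [← hL]) (hL ▸ hle)
  have hidx : (a :: L).idxOf m = A.length := by
    rw [← hL, List.idxOf_append_of_notMem fun h => (hA m h).false, List.idxOf_cons_self,
      add_zero]
  rw [hL]
  simp only [decAux]
  rw [hmax, hidx, ← hL, List.take_left' rfl, ← List.singleton_append, ← List.append_assoc,
    List.drop_left' (by simp)]

theorem BT.IsDecreasing.decAux_infixRead {t : BT ℕ+} (ht : IsDecreasing t) {n : ℕ}
    (hn : (infixRead t).length ≤ n) : decAux n (infixRead t) = t := by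
  induction t generalizing n with
  | leaf => cases n <;> rfl
  | node l a r ihl ihr =>
    obtain ⟨hl, hr, htl, htr⟩ := ht
    simp only [infixRead, List.length_append, List.length_cons] at hn ⊢
    obtain ⟨k, rfl⟩ : ∃ k, n = k + 1 := ⟨n - 1, by omega⟩
    rw [decAux_append_cons k (fun x hx => hl x (mem_infixRead.1 hx))
      (fun x hx => (hr x (mem_infixRead.1 hx)).le), ihl htl (by omega), ihr htr (by omega)]

theorem BT.IsDecreasing.decTree_infixRead {t : BT ℕ+} (ht : IsDecreasing t) :
    decTree (infixRead t) = t :=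
  ht.decAux_infixRead le_rfl

theorem map_getD_range {α : Type} (y : List α) (d : α) :
    (List.range y.length).map (y.getD · d) = y :=
  List.ext_getElem (by simp) fun i _ _ => by
    rw [List.getElem_map, List.getElem_range, List.getD_eq_getElem]

theorem Psylv_eq_map_foldr_insBy (y : List ℕ+) :
    Psylv y = map (y.getD · 1) ((List.range y.length).foldr
      (insBy fun i j => decide (y.getD i 1 ≤ y.getD j 1)) leaf) := by
  rw [map_foldr_insBy (y.getD · 1) (fun a b => decide (a ≤ b)), map_getD_range, Psylv]
  congr 1
  funext a t
  exact rIns_eq_insBy a t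

theorem shape_Psylv_eq_of_le_iff {y z : List ℕ+} (hlen : y.length = z.length)
    (h : ∀ i j, i < j → j < y.length →
      (y.getD i 1 ≤ y.getD j 1 ↔ z.getD i 1 ≤ z.getD j 1)) :
    shape (Psylv y) = shape (Psylv z) := by
  rw [Psylv_eq_map_foldr_insBy, Psylv_eq_map_foldr_insBy, shape_map, shape_map, ← hlen,
    foldr_insBy_congr]
  refine List.pairwise_lt_range.imp_of_mem fun _ hj hij => ?_
  simpa using h _ _ hij (List.mem_range.1 hj)

theorem pairwise_lt_map_range_succ (n : ℕ) :
    ((List.range n).map fun j => (j + 1).toPNat').Pairwise (· < ·) :=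
  List.pairwise_lt_range.map _ fun _ _ => Nat.succPNat_lt_succPNat.2

theorem IsStandard.nodup {w : List ℕ+} (hw : IsStandard w) : w.Nodup :=
  hw.nodup_iff.2 (pairwise_lt_map_range_succ _).nodup

theorem IsStandard.infixRead_Psylv {w : List ℕ+} (hw : IsStandard w) :
    infixRead (Psylv w) = (List.range w.length).map fun j => (j + 1).toPNat' := by
  refine List.Perm.eq_of_pairwise' (isRBST_Psylv w).pairwise_infixRead
    ((pairwise_lt_map_range_succ _).imp le_of_lt) (List.Perm.trans ?_ hw)
  rw [← Multiset.coe_eq_coe, coe_infixRead, content_Psylv]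

theorem IsStandard.shape_decTree_invWord {w : List ℕ+} (hw : IsStandard w) :
    shape (decTree (invWord w)) = shape (Psylv w) := by
  -- `T` is `Psylv w` with every letter replaced by its position in `w`.
  set T := (List.range w.length).foldr
    (insBy fun i j => decide (w.getD i 1 ≤ w.getD j 1)) leaf
  have hP : Psylv w = map (w.getD · 1) T := Psylv_eq_map_foldr_insBy w
  have hT : ∀ i ∈ infixRead T, i < w.length := fun i hi => by
    simpa [mem_infixRead, T, content_foldr_insBy] using hi
  have hinv : invWord w = infixRead (map Nat.succPNat T) := calc
    invWord w = ((List.range w.length).map fun j => (j + 1).toPNat').map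
        fun b => (w.idxOf b).succPNat := by rw [invWord, List.map_map]; rfl
    _ = ((infixRead T).map (w.getD · 1)).map fun b => (w.idxOf b).succPNat := by
        rw [← hw.infixRead_Psylv, hP, infixRead_map]
    _ = infixRead (map Nat.succPNat T) := by
        rw [infixRead_map, List.map_map]
        refine List.map_congr_left fun i hi => ?_
        rw [Function.comp_apply, List.getD_eq_getElem _ _ (hT i hi), hw.nodup.idxOf_getElem]
  have hdec : IsDecreasing (map Nat.succPNat T) :=
    (isDecreasing_foldr_insBy _ List.pairwise_lt_range).map Nat.succPNat_strictMono
  rw [hinv, hdec.decTree_infixRead, shape_map, hP, shape_map]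

theorem countP_lt_add_countP_eq {α : Type} [LinearOrder α] (l : List α) (a : α) :
    l.countP (fun b => decide (b < a)) + l.countP (fun b => decide (b = a)) =
      l.countP (fun b => decide (b ≤ a)) := by
  induction l with
  | nil => rfl
  | cons x l ih =>
    simp only [List.countP_cons]
    rcases lt_trichotomy x a with h | rfl | h
    · simp [h, h.ne, h.le]; omega
    · simp; omega
    · simp [h.not_gt, h.ne', h.not_ge]; omega

section Standardization

variable (u : List ℕ+)

def stdRank (j : ℕ) : ℕ :=
  u.countP (fun b => decide (b < u.getD j 1)) +
    (u.take (j + 1)).countP (fun b => decide (b = u.getD j 1))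

theorem length_stdWord : (stdWord u).length = u.length :=
  List.length_mapIdx

variable {u}

theorem countP_take_succ_eq_getD {j : ℕ} (hj : j < u.length) :
    (u.take (j + 1)).countP (fun b => decide (b = u.getD j 1)) =
      (u.take j).countP (fun b => decide (b = u.getD j 1)) + 1 := by
  rw [← List.take_concat_get' u j hj, List.countP_append, List.getD_eq_getElem _ _ hj]
  simp

theorem stdRank_pos {j : ℕ} (hj : j < u.length) : 0 < stdRank u j := by
  rw [stdRank, countP_take_succ_eq_getD hj]
  omega

variable (u) in
theorem stdRank_le_countP_le (j : ℕ) :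
    stdRank u j ≤ u.countP (fun b => decide (b ≤ u.getD j 1)) := by
  have := (List.take_sublist (j + 1) u).countP_le (p := fun b => decide (b = u.getD j 1))
  rw [← countP_lt_add_countP_eq, stdRank]
  omega

variable (u) in
theorem stdRank_le_length (j : ℕ) : stdRank u j ≤ u.length :=
  (stdRank_le_countP_le u j).trans List.countP_le_length

theorem coe_getD_stdWord {j : ℕ} (hj : j < u.length) :
    ((stdWord u).getD j 1 : ℕ) = stdRank u j := by
  rw [List.getD_eq_getElem _ _ (by rwa [length_stdWord])]
  simp only [stdWord]
  rw [List.getElem_mapIdx,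
    ← List.getD_eq_getElem _ 1 hj, ← stdRank, PNat.toPNat'_coe (stdRank_pos hj)]

theorem stdRank_lt_of_getD_lt {i j : ℕ} (hj : j < u.length) (h : u.getD i 1 < u.getD j 1) :
    stdRank u i < stdRank u j := by
  have hi := stdRank_le_countP_le u i
  have hij : u.countP (fun b => decide (b ≤ u.getD i 1)) ≤
      u.countP (fun b => decide (b < u.getD j 1)) :=
    List.countP_mono_left fun b _ hb => by simpa using (of_decide_eq_true hb).trans_lt h
  unfold stdRank at hi ⊢
  rw [countP_take_succ_eq_getD hj]
  omega

theorem stdRank_lt_of_getD_eq {i j : ℕ} (hij : i < j) (hj : j < u.length)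
    (h : u.getD i 1 = u.getD j 1) : stdRank u i < stdRank u j := by
  have := (List.take_sublist_take_left (l := u) (show i + 1 ≤ j by omega)).countP_le
    (p := fun b => decide (b = u.getD j 1))
  unfold stdRank
  rw [h, countP_take_succ_eq_getD hj]
  omega

theorem stdRank_lt_iff {i j : ℕ} (hij : i < j) (hj : j < u.length) :
    stdRank u i < stdRank u j ↔ u.getD i 1 ≤ u.getD j 1 := by
  refine ⟨fun hr => not_lt.1 fun h => (stdRank_lt_of_getD_lt (hij.trans hj) h).asymm hr,
    fun h => ?_⟩
  rcases h.lt_or_eq with h | h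
  exacts [stdRank_lt_of_getD_lt hj h, stdRank_lt_of_getD_eq hij hj h]

theorem stdRank_ne {i j : ℕ} (hij : i < j) (hj : j < u.length) :
    stdRank u i ≠ stdRank u j := by
  rcases le_or_gt (u.getD i 1) (u.getD j 1) with h | h
  · exact ((stdRank_lt_iff hij hj).2 h).ne
  · exact (stdRank_lt_of_getD_lt (hij.trans hj) h).ne'

theorem getD_stdWord_le_iff {i j : ℕ} (hij : i < j) (hj : j < u.length) :
    (stdWord u).getD i 1 ≤ (stdWord u).getD j 1 ↔ u.getD i 1 ≤ u.getD j 1 := by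
  rw [← PNat.coe_le_coe, coe_getD_stdWord (hij.trans hj), coe_getD_stdWord hj,
    ← stdRank_lt_iff hij hj, le_iff_lt_or_eq, or_iff_left (stdRank_ne hij hj)]

variable (u)

theorem isStandard_stdWord : IsStandard (stdWord u) := by
  have hnd : (stdWord u).Nodup := by
    refine List.pairwise_iff_getElem.2 fun i j hi hj hij he =>
      stdRank_ne hij (length_stdWord u ▸ hj) ?_
    rw [← coe_getD_stdWord (length_stdWord u ▸ hi),
      ← coe_getD_stdWord (length_stdWord u ▸ hj),
      List.getD_eq_getElem _ _ hi, List.getD_eq_getElem _ _ hj, he]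
  have hsub : stdWord u ⊆ (List.range (stdWord u).length).map fun j => (j + 1).toPNat' := by
    intro b hb
    obtain ⟨j, hj, rfl⟩ := List.getElem_of_mem hb
    have hj' : j < u.length := length_stdWord u ▸ hj
    have hb := coe_getD_stdWord hj'
    rw [List.getD_eq_getElem _ _ hj] at hb
    have := stdRank_pos hj'
    have := stdRank_le_length u j
    refine List.mem_map.2 ⟨stdRank u j - 1, List.mem_range.2 ?_, PNat.eq ?_⟩
    · rw [length_stdWord]
      omega
    · rw [PNat.toPNat'_coe (by omega), hb]
      omega
  exact (List.subperm_of_subset hnd hsub).perm_of_length_le (by simp)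

theorem shape_Psylv_stdWord : shape (Psylv (stdWord u)) = shape (Psylv u) :=
  shape_Psylv_eq_of_le_iff (length_stdWord u) fun _ _ hij hj =>
    getD_stdWord_le_iff hij (length_stdWord u ▸ hj)

theorem shape_decTree_invWord_stdWord :
    shape (decTree (invWord (stdWord u))) = shape (Psylv u) :=
  (isStandard_stdWord u).shape_decTree_invWord.trans (shape_Psylv_stdWord u)

end Standardization

/-- Two words insert to the same right strict binary search tree if and only
if they have the same weight and the decreasing trees of the inverses of
their standardizations have the same shape. -/
theorem Psylv_eq_iff_weight_and_shape (u v : List ℕ+) :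
    Psylv u = Psylv v ↔
      (↑u : Multiset ℕ+) = (↑v : Multiset ℕ+) ∧
        shape (decTree (invWord (stdWord u))) =
          shape (decTree (invWord (stdWord v))) := by
  rw [shape_decTree_invWord_stdWord, shape_decTree_invWord_stdWord, ← content_Psylv u,
    ← content_Psylv v]
  refine ⟨fun h => ⟨congrArg content h, congrArg shape h⟩, fun ⟨hc, hs⟩ => ?_⟩
  exact (isRBST_Psylv u).ext (isRBST_Psylv v) hs hc
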